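/- Let h ≥ 1 and let X ⊆ B^h be nonempty with ∨_{x∈X} x = 1^h (every coordinate is 1 in some element of X). If v is a minimal vertex of G = Q_h(X), then v has degree h in G. -/

import Mathlib

open SimpleGraph

/-- The hypercube `Q_h` on binary words of length `h`: two words are adjacent
iff their Hamming distance is `1`. -/
def Qcube (h : ℕ) : SimpleGraph (Fin h → Bool) where
  Adj u v := hammingDist u v = 1
  symm := ⟨fun u v (huv : hammingDist u v = 1) => (by rw [hammingDist_comm]; exact huv : hammingDist v u = 1)⟩
  loopless := ⟨fun u (hu : hammingDist u u = 1) => by rw [hammingDist_self] at hu; exact absurd hu (by norm_num)⟩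

/-- Vertex set of the daisy cube `Q_h(X)`: all words below some element of `X`. -/
def daisyVerts {h : ℕ} (X : Set (Fin h → Bool)) : Set (Fin h → Bool) :=
  {v | ∃ x ∈ X, v ≤ x}

/-- The daisy cube `Q_h(X)`, the subgraph of `Q_h` induced by `daisyVerts X`. -/
def daisyGraph {h : ℕ} (X : Set (Fin h → Bool)) : SimpleGraph (daisyVerts X) :=
  SimpleGraph.induce (daisyVerts X) (Qcube h)

/-- `\widehat X`: the set of maximal elements of the poset `(X, ≤)`. -/
def maxSet {h : ℕ} (X : Set (Fin h → Bool)) : Set (Fin h → Bool) :=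
  {x ∈ X | ∀ y ∈ X, x ≤ y → x = y}

/-- The all-zeros word `0^h`. -/
def zeroW (h : ℕ) : Fin h → Bool := fun _ => false

/-- Bitwise XOR of words. -/
def xorW {h : ℕ} (u v : Fin h → Bool) : Fin h → Bool := fun i => xor (u i) (v i)

/-- Bitwise AND of words. -/
def andW {h : ℕ} (u v : Fin h → Bool) : Fin h → Bool := fun i => u i && v i

/-- The weight `w(u)`: the number of ones of a word. -/
def weightW {h : ℕ} (u : Fin h → Bool) : ℕ :=
  (Finset.univ.filter fun i => u i = true).card

/-- The interval `I_G(u,v)`: vertices lying on shortest `u,v`-paths. -/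
def gInterval {V : Type*} (G : SimpleGraph V) (u v : V) : Set V :=
  {w | G.dist u w + G.dist w v = G.dist u v}

/-- `N^u(v)`: neighbors of `v` that are closer to `u` than `v` is. -/
def lowerNbrs {V : Type*} (G : SimpleGraph V) (u v : V) : Set V :=
  {z | G.Adj v z ∧ G.dist u z + 1 = G.dist u v}

/-- `α` is an isometric embedding of `G` into `Q_h`. -/
def IsIsomEmb {V : Type*} (G : SimpleGraph V) {h : ℕ} (α : V → Fin h → Bool) : Prop :=
  ∀ a b, hammingDist (α a) (α b) = G.dist a b

/-- `α` is a proper embedding of `G` into `Q_h`: an isometric embedding such that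
`G` is isomorphic to the daisy cube generated by the image of `α`. -/
def IsProperEmb {V : Type*} (G : SimpleGraph V) {h : ℕ} (α : V → Fin h → Bool) : Prop :=
  IsIsomEmb G α ∧ Nonempty (G ≃g daisyGraph (Set.range α))

/-- `v` is a minimal vertex of `G`: some proper embedding sends `v` to `0^h`. -/
def IsMinVertex {V : Type*} (G : SimpleGraph V) (h : ℕ) (v : V) : Prop :=
  ∃ α : V → Fin h → Bool, IsProperEmb G α ∧ α v = zeroW h

/-- The labeling conditions of Proposition `cubes`/Lemma `partial`: `α v = 0^h`,
the neighbors of `v` get pairwise distinct weight-one labels, and every other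
vertex gets the bitwise OR of the labels of its down-neighbors. -/
def goodLabeling {V : Type*} (G : SimpleGraph V) {h : ℕ} (v : V)
    (α : V → Fin h → Bool) : Prop :=
  α v = zeroW h ∧
  Set.InjOn α (G.neighborSet v) ∧
  (∀ z ∈ G.neighborSet v, weightW (α z) = 1) ∧
  (∀ u ∉ insert v (G.neighborSet v),
    ∀ i, α u i = true ↔ ∃ z ∈ lowerNbrs G v u, α z i = true)



section stmt18Aux
variable {h : ℕ}

lemma daisy_adj_iff {X : Set (Fin h → Bool)} {a b : daisyVerts X} :
    (daisyGraph X).Adj a b ↔ hammingDist a.val b.val = 1 := Iff.rfl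

lemma hamming_eq_one_iff {u w : Fin h → Bool} :
    hammingDist u w = 1 ↔ ∃ i, ∀ j, u j ≠ w j ↔ j = i := by
  rw [hammingDist, Finset.card_eq_one]; simp [Finset.ext_iff]

lemma daisy_reach_zero {X : Set (Fin h → Bool)} (z0 : daisyVerts X) (hz : z0.val = zeroW h)
    (a : daisyVerts X) : (daisyGraph X).Reachable a z0 := by
  classical
  obtain ⟨u, hu⟩ := a
  suffices H : ∀ n (u : Fin h → Bool) (hu : u ∈ daisyVerts X), weightW u ≤ n →
      (daisyGraph X).Reachable ⟨u, hu⟩ z0 from H (weightW u) u hu le_rfl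
  intro n
  induction n with
  | zero =>
    intro u hu hw
    have hu0 : u = zeroW h := by
      funext i
      cases hui : u i with
      | false => rfl
      | true =>
        exfalso
        have : 0 < weightW u := Finset.card_pos.2 ⟨i, by simp [hui]⟩
        omega
    have : (⟨u, hu⟩ : daisyVerts X) = z0 := Subtype.ext (hu0.trans hz.symm)
    rw [this]
  | succ n ih =>
    intro u hu hw
    by_cases hu0 : u = zeroW h
    · have : (⟨u, hu⟩ : daisyVerts X) = z0 := Subtype.ext (hu0.trans hz.symm)
      rw [this]
    · have hex : ∃ i, u i = true := by
        by_contra hc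
        push_neg at hc
        exact hu0 (funext fun i => by simpa [zeroW] using hc i)
      obtain ⟨i, hi⟩ := hex
      set u' := Function.update u i false with hu'def
      have hle : u' ≤ u := by
        intro j
        rw [hu'def, Function.update_apply]
        split
        · exact Bool.false_le _
        · exact le_rfl
      have hu' : u' ∈ daisyVerts X := by
        obtain ⟨x, hx, hux⟩ := hu
        exact ⟨x, hx, le_trans hle hux⟩
      have hadj : (daisyGraph X).Adj ⟨u, hu⟩ ⟨u', hu'⟩ := by
        rw [daisy_adj_iff, hamming_eq_one_iff]
        refine ⟨i, fun j => ?_⟩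
        show u j ≠ u' j ↔ j = i
        rw [hu'def, Function.update_apply]
        constructor
        · intro hj
          by_contra hji
          rw [if_neg hji] at hj
          exact hj rfl
        · rintro rfl
          rw [if_pos rfl, hi]
          simp
      have hwt : weightW u' ≤ n := by
        have hfil : (Finset.univ.filter fun j => u' j = true)
            = (Finset.univ.filter fun j => u j = true).erase i := by
          ext j
          rw [Finset.mem_erase]
          simp only [Finset.mem_filter, Finset.mem_univ, true_and, hu'def,
            Function.update_apply]
          constructor
          · intro hj
            by_cases hji : j = i
            · rw [if_pos hji] at hj; exact absurd hj (by simp)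
            · rw [if_neg hji] at hj; exact ⟨hji, hj⟩
          · rintro ⟨hji, hj⟩
            rw [if_neg hji]; exact hj
        have hmem : i ∈ Finset.univ.filter fun j => u j = true := by simp [hi]
        have : weightW u' = weightW u - 1 := by
          rw [weightW, weightW, hfil, Finset.card_erase_of_mem hmem]
        have hpos : 0 < weightW u := Finset.card_pos.2 ⟨i, hmem⟩
        omega
      exact hadj.reachable.trans (ih u' hu' hwt)

lemma daisy_preconnected {X : Set (Fin h → Bool)} (hX : X.Nonempty) :
    (daisyGraph X).Preconnected := by
  obtain ⟨x, hx⟩ := hX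
  have hz : zeroW h ∈ daisyVerts X := ⟨x, hx, fun i => Bool.false_le _⟩
  intro a b
  exact (daisy_reach_zero ⟨_, hz⟩ rfl a).trans (daisy_reach_zero ⟨_, hz⟩ rfl b).symm

/-- Coordinates used by some word of `Z`. -/
def usedC (Z : Set (Fin h → Bool)) : Set (Fin h) := {i | ∃ x ∈ Z, x i = true}

/-- The weight-one word with a one in position `i`. -/
def eW (i : Fin h) : Fin h → Bool := fun j => if j = i then true else false

lemma eW_injective : Function.Injective (eW (h := h)) := by
  intro i j hij
  by_contra hne
  have h1 := congrFun hij i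
  simp [eW, hne] at h1

lemma used_of_mem_daisy {Z : Set (Fin h → Bool)} {u : Fin h → Bool} {i : Fin h}
    (hu : u ∈ daisyVerts Z) (hi : u i = true) : i ∈ usedC Z := by
  obtain ⟨x, hx, hux⟩ := hu
  exact ⟨x, hx, le_antisymm (Bool.le_true _) (hi ▸ hux i)⟩

/-- The degree of any vertex of a daisy graph is at most the number of
used coordinates. -/
lemma deg_le_used {Z : Set (Fin h → Bool)} (w : daisyVerts Z) :
    ((daisyGraph Z).neighborSet w).ncard ≤ (usedC Z).ncard := by
  classical
  have h1 : ((daisyGraph Z).neighborSet w).ncard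
      = (Subtype.val '' ((daisyGraph Z).neighborSet w)).ncard :=
    (Set.ncard_image_of_injective _ Subtype.val_injective).symm
  have h2 : (Subtype.val '' ((daisyGraph Z).neighborSet w)).ncard
      = (xorW w.val '' (Subtype.val '' ((daisyGraph Z).neighborSet w))).ncard := by
    refine (Set.ncard_image_of_injective _ ?_).symm
    intro a b hab
    funext j
    have := congrFun hab j
    simp only [xorW] at this
    cases hwj : w.val j <;> rw [hwj] at this <;> simpa using this
  have h3 : (eW '' usedC Z).ncard = (usedC Z).ncard :=
    Set.ncard_image_of_injective _ eW_injective
  rw [h1, h2, ← h3]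
  refine Set.ncard_le_ncard ?_ (Set.toFinite _)
  rintro e ⟨u, ⟨z, hz, rfl⟩, rfl⟩
  have hadj : hammingDist w.val z.val = 1 := hz
  obtain ⟨i, hi⟩ := hamming_eq_one_iff.mp hadj
  have hxe : xorW w.val z.val = eW i := by
    funext j
    by_cases hji : j = i
    · subst hji
      have hne : w.val j ≠ z.val j := (hi j).mpr rfl
      simp only [xorW, eW, if_pos rfl]
      cases hwj : w.val j <;> cases hzj : z.val j <;> simp_all
    · have heq : w.val j = z.val j := by
        by_contra hne
        exact hji ((hi j).mp hne)
      simp only [xorW, eW, if_neg hji, heq]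
      cases z.val j <;> rfl
  rw [hxe]
  refine ⟨i, ?_, rfl⟩
  have hne : w.val i ≠ z.val i := (hi i).mpr rfl
  cases hzi : z.val i with
  | true => exact used_of_mem_daisy z.2 hzi
  | false =>
    have hwi : w.val i = true := by
      rw [hzi] at hne
      cases hwi : w.val i
      · exact absurd hwi hne
      · rfl
    exact used_of_mem_daisy w.2 hwi

/-- The degree of the zero vertex equals the number of used coordinates. -/
lemma deg_zero_eq_used {Z : Set (Fin h → Bool)} (z0 : daisyVerts Z) (hz : z0.val = zeroW h) :
    ((daisyGraph Z).neighborSet z0).ncard = (usedC Z).ncard := by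
  classical
  have key : Subtype.val '' ((daisyGraph Z).neighborSet z0) = eW '' usedC Z := by
    ext u
    constructor
    · rintro ⟨z, hz1, rfl⟩
      have hadj : hammingDist z0.val z.val = 1 := hz1
      obtain ⟨i, hi⟩ := hamming_eq_one_iff.mp hadj
      have hzi : z.val i = true := by
        have hne : z0.val i ≠ z.val i := (hi i).mpr rfl
        rw [hz] at hne
        cases hzi : z.val i
        · exact absurd (by rw [hzi]; rfl) hne
        · rfl
      have : z.val = eW i := by
        funext j
        by_cases hji : j = i
        · subst hji; simp [eW, hzi]
        · have : ¬ (z0.val j ≠ z.val j) := fun hne => hji ((hi j).mp hne)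
          push_neg at this
          rw [← this, hz]
          simp [eW, hji, zeroW]
      rw [this]
      exact ⟨i, used_of_mem_daisy z.2 hzi, rfl⟩
    · rintro ⟨i, ⟨x, hx, hxi⟩, rfl⟩
      have hmem : eW i ∈ daisyVerts Z := by
        refine ⟨x, hx, fun j => ?_⟩
        by_cases hji : j = i
        · subst hji; simp [eW, hxi]
        · simp [eW, hji]
      refine ⟨⟨eW i, hmem⟩, ?_, rfl⟩
      show hammingDist z0.val (eW i) = 1
      rw [hamming_eq_one_iff]
      refine ⟨i, fun j => ?_⟩
      rw [hz]
      by_cases hji : j = i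
      · subst hji; simp [eW, zeroW]
      · simp [eW, zeroW, hji]
  calc ((daisyGraph Z).neighborSet z0).ncard
      = (Subtype.val '' ((daisyGraph Z).neighborSet z0)).ncard :=
        (Set.ncard_image_of_injective _ Subtype.val_injective).symm
    _ = (eW '' usedC Z).ncard := by rw [key]
    _ = (usedC Z).ncard := Set.ncard_image_of_injective _ eW_injective

end stmt18Aux

/-- Let `X ⊆ B^h` be nonempty with `∨_{x ∈ X} x = 1^h`. Then every
minimal vertex of the daisy cube `G = Q_h(X)` has degree `h` in `G`. -/
theorem stmt_18 (h : ℕ) (hh : 1 ≤ h) (X : Set (Fin h → Bool)) (hX : X.Nonempty)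
    (hfull : ∀ i : Fin h, ∃ x ∈ X, x i = true)
    (v : daisyVerts X) (hv : IsMinVertex (daisyGraph X) h v) :
    ((daisyGraph X).neighborSet v).ncard = h := by
    classical
  obtain ⟨α, ⟨hiso, ⟨φ⟩⟩, hαv⟩ := hv
  have pre : (daisyGraph X).Preconnected := daisy_preconnected hX
  have hαinj : Function.Injective α := by
    intro a b hab
    have hd := hiso a b
    rw [hab, hammingDist_self] at hd
    exact ((pre a b).dist_eq_zero_iff).mp hd.symm
  set Y := Set.range α with hYdef
  have hYsub : Y ⊆ daisyVerts Y := fun u hu => ⟨u, hu, le_rfl⟩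
  have hc1 : Nat.card (daisyVerts X) = Nat.card Y :=
    Nat.card_congr (Equiv.ofInjective α hαinj)
  have hc2 : Nat.card (daisyVerts X) = Nat.card (daisyVerts Y) := Nat.card_congr φ.toEquiv
  have hYeq : Y = daisyVerts Y := by
    refine Set.eq_of_subset_of_ncard_le hYsub ?_ (Set.toFinite _)
    rw [← Nat.card_coe_set_eq, ← Nat.card_coe_set_eq, ← hc1, ← hc2]
  have hadj : ∀ a b : daisyVerts X,
      (daisyGraph X).Adj a b ↔ hammingDist (α a) (α b) = 1 := by
    intro a b
    rw [← SimpleGraph.dist_eq_one_iff_adj, ← hiso a b]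
  have hmem : ∀ a : daisyVerts X, α a ∈ daisyVerts Y :=
    fun a => hYsub (Set.mem_range_self a)
  let β : daisyVerts X ≃ daisyVerts Y := Equiv.ofBijective (fun a => ⟨α a, hmem a⟩)
    ⟨fun a b hab => hαinj (congrArg Subtype.val hab),
     fun u => by
       have hu : u.val ∈ Y := hYeq.symm.subset u.2
       obtain ⟨a, ha⟩ := hu
       exact ⟨a, Subtype.ext ha⟩⟩
  let ψ : daisyGraph X ≃g daisyGraph Y :=
    { β with map_rel_iff' := fun {a b} => (hadj a b).symm }
  have degtrans : ∀ w : daisyVerts X,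
      ((daisyGraph X).neighborSet w).ncard = ((daisyGraph Y).neighborSet (ψ w)).ncard := by
    intro w
    rw [← Nat.card_coe_set_eq, ← Nat.card_coe_set_eq]
    exact Nat.card_congr (ψ.mapNeighborSet w)
  have hv1 : ((daisyGraph X).neighborSet v).ncard = (usedC Y).ncard := by
    rw [degtrans v]
    exact deg_zero_eq_used (ψ v) hαv
  obtain ⟨x0, hx0⟩ := hX
  have hz0 : zeroW h ∈ daisyVerts X := ⟨x0, hx0, fun i => Bool.false_le _⟩
  have hdeg0 : ((daisyGraph X).neighborSet ⟨zeroW h, hz0⟩).ncard = (usedC X).ncard :=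
    deg_zero_eq_used _ rfl
  have husedX : usedC X = Set.univ := Set.eq_univ_of_forall fun i => hfull i
  have hXh : (usedC X).ncard = h := by
    rw [husedX, Set.ncard_univ, Nat.card_eq_fintype_card, Fintype.card_fin]
  have hge : h ≤ (usedC Y).ncard := by
    have hA := deg_le_used (Z := Y) (ψ ⟨zeroW h, hz0⟩)
    have hB := degtrans ⟨zeroW h, hz0⟩
    omega
  have hlt : (usedC Y).ncard ≤ h := by
    have := Set.ncard_le_ncard (Set.subset_univ (usedC Y)) (Set.toFinite _)
    rwa [Set.ncard_univ, Nat.card_eq_fintype_card, Fintype.card_fin] at this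
  rw [hv1]
  omega
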